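/- Let T be a stopping time with respect to a filtration, valued in ℕ ∪ {∞}, and let γ > 0, k ≥ 1 be such that P{T ≥ s + k | T ≥ s} < 1 − k/γ for every s ≥ 1 with P{T ≥ s} > 0. Then E[T] < γ. -/

import Mathlib

/-!
Write `b n = P{T > n}`, so that `E[T] = ∑ b n`, and `c = 1 - k/γ`. The hypothesis says
`b (n + k) ≤ c * b n` for every `n`, strictly at `n = 0` unless `T = 0` almost surely.
Splitting off the first `k` terms gives `∑ b < k + c * ∑ b`, i.e. `(k/γ) * ∑ b < k`, as each
`b n ≤ 1`; the same splitting on partial sums shows that `∑ b` converges in the first place.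
-/

open MeasureTheory ProbabilityTheory
open scoped ENNReal

section ShiftContraction

open Finset

variable {b : ℕ → ℝ} {c : ℝ} {k : ℕ}

theorem summable_of_shift_le_mul (hb : ∀ n, 0 ≤ b n) (hc : c < 1)
    (hshift : ∀ n, b (n + k) ≤ c * b n) : Summable b := by
  refine summable_of_sum_range_le hb (c := (∑ n ∈ range k, b n) / (1 - c)) fun N => ?_
  have hsplit :
      ∑ n ∈ range (k + N), b n = ∑ n ∈ range k, b n + ∑ n ∈ range N, b (k + n) :=
    sum_range_add b k N
  have hmono : ∑ n ∈ range N, b n ≤ ∑ n ∈ range (k + N), b n :=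
    sum_le_sum_of_subset_of_nonneg (range_subset_range.2 (Nat.le_add_left N k)) fun n _ _ => hb n
  have htail : ∑ n ∈ range N, b (k + n) ≤ c * ∑ n ∈ range N, b n := by
    rw [mul_sum]
    gcongr with n
    rw [add_comm]
    exact hshift n
  rw [le_div_iff₀ (sub_pos.2 hc)]
  linarith

theorem one_sub_mul_tsum_lt_sum_range_of_shift_le_mul (hb : ∀ n, 0 ≤ b n) (hc : c < 1)
    (hshift : ∀ n, b (n + k) ≤ c * b n) (hstrict : b k < c * b 0) :
    (1 - c) * ∑' n, b n < ∑ n ∈ range k, b n := by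
  have hsum := summable_of_shift_le_mul hb hc hshift
  have hsplit := hsum.sum_add_tsum_nat_add k
  have htail : ∑' n, b (n + k) < c * ∑' n, b n := by
    rw [← tsum_mul_left]
    exact Summable.tsum_lt_tsum hshift (i := 0) (by simpa using hstrict)
      ((summable_nat_add_iff k).2 hsum) (hsum.mul_left c)
  linarith

theorem shift_le_mul_of_shift_lt_mul (hanti : Antitone b)
    (hstep : ∀ n, b n ≠ 0 → b (n + k) < c * b n) (n : ℕ) : b (n + k) ≤ c * b n := by
  by_cases hn : b n = 0
  · simpa [hn] using hanti (Nat.le_add_right n k)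
  · exact (hstep n hn).le

theorem tsum_lt_div_of_shift_lt_mul (hb : ∀ n, 0 ≤ b n) (hb_le_one : ∀ n, b n ≤ 1)
    (hanti : Antitone b) (hk : 0 < k) (hc : c < 1)
    (hstep : ∀ n, b n ≠ 0 → b (n + k) < c * b n) : ∑' n, b n < k / (1 - c) := by
  by_cases hb0 : b 0 = 0
  · have hzero : b = 0 :=
      funext fun n => le_antisymm ((hanti (Nat.zero_le n)).trans hb0.le) (hb n)
    simp only [hzero, Pi.zero_apply, tsum_zero]
    exact div_pos (Nat.cast_pos.2 hk) (sub_pos.2 hc)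
  have hkey := one_sub_mul_tsum_lt_sum_range_of_shift_le_mul hb hc
    (shift_le_mul_of_shift_lt_mul hanti hstep) (by simpa using hstep 0 hb0)
  have hhead : ∑ n ∈ range k, b n ≤ k := by
    simpa using sum_le_sum fun n (_ : n ∈ range k) => hb_le_one n
  rw [lt_div_iff₀ (sub_pos.2 hc), mul_comm]
  linarith

end ShiftContraction

theorem lintegral_natCast_eq_tsum_measure_lt {Ω : Type*} [MeasurableSpace Ω] (μ : Measure Ω)
    {X : Ω → ℕ} (hX : Measurable X) :
    ∫⁻ ω, (X ω : ℝ≥0∞) ∂μ = ∑' n, μ {ω | n < X ω} := by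
  have hset : ∀ n, MeasurableSet {ω | n < X ω} := fun n => hX measurableSet_Ioi
  have hpoint : ∀ ω, (X ω : ℝ≥0∞) = ∑' n, {ω | n < X ω}.indicator 1 ω := by
    intro ω
    rw [tsum_eq_sum (s := Finset.range (X ω)) fun n hn => by simp_all,
      Finset.sum_congr rfl (g := fun _ => 1) fun n hn => by simp_all]
    simp
  simp_rw [hpoint]
  rw [lintegral_tsum fun n => (measurable_one.indicator (hset n)).aemeasurable]
  simp only [lintegral_indicator_one (hset _)]

theorem measureReal_lt_mul_of_cond_lt {Ω : Type*} [MeasurableSpace Ω] {μ : Measure Ω}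
    [IsFiniteMeasure μ] {s t : Set Ω} (hs : MeasurableSet s) (hts : t ⊆ s) (hμs : μ s ≠ 0)
    {c : ℝ} (h : (μ[t|s]).toReal < c) : μ.real t < c * μ.real s := by
  have hmul : (μ[t|s]).toReal * μ.real s = μ.real t := by
    rw [measureReal_def, measureReal_def, ← ENNReal.toReal_mul, cond_mul_eq_inter hs,
      Set.inter_eq_right.2 hts]
  rw [← hmul]
  exact mul_lt_mul_of_pos_right h (ENNReal.toReal_pos hμs (measure_ne_top μ s))

theorem expectation_lt_of_cond_survival {Ω : Type*} [MeasurableSpace Ω]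
    (P : Measure Ω) [IsProbabilityMeasure P]
    (𝓕 : Filtration ℕ ‹MeasurableSpace Ω›) (T : Ω → ℕ) (hT : IsStoppingTime 𝓕 (fun ω => (T ω : WithTop ℕ)))
    (γ : ℝ) (hγ : 0 < γ) (k : ℕ) (hk : 1 ≤ k)
    (hcond : ∀ s : ℕ, 1 ≤ s → P {ω | s ≤ T ω} ≠ 0 →
      (P[|{ω | s ≤ T ω}] {ω | s + k ≤ T ω}).toReal < 1 - (k : ℝ) / γ) :
    ∫⁻ ω, (T ω : ℝ≥0∞) ∂P < ENNReal.ofReal γ := by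
  have hTmeas : Measurable T := measurable_to_nat fun ω => 𝓕.le _ _ <| by
    convert hT.measurableSet_eq (T ω) using 1
    ext; simp
  set b : ℕ → ℝ := fun n => P.real {ω | n < T ω}
  have hb : ∀ n, 0 ≤ b n := fun n => measureReal_nonneg
  have hanti : Antitone b := fun m n hmn => measureReal_mono fun ω hω => hmn.trans_lt hω
  have hc : 1 - k / γ < 1 := sub_lt_self 1 (div_pos (by exact_mod_cast hk) hγ)
  have hstep : ∀ n, b n ≠ 0 → b (n + k) < (1 - k / γ) * b n := by
    intro n hn
    have hshifted : {ω | n + 1 + k ≤ T ω} = {ω | n + k < T ω} := by ext; simp; omega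
    have hn' := (measureReal_ne_zero_iff).1 hn
    -- `{ω | n + 1 ≤ T ω}` is `{ω | n < T ω}` by definition of `<` on `ℕ`
    have h := hcond (n + 1) le_add_self hn'
    rw [hshifted] at h
    exact measureReal_lt_mul_of_cond_lt (hTmeas measurableSet_Ioi)
      (fun ω hω => Nat.lt_of_le_of_lt (Nat.le_add_right n k) hω) hn' h
  have hsummable := summable_of_shift_le_mul hb hc (shift_le_mul_of_shift_lt_mul hanti hstep)
  have hsum_lt : ∑' n, b n < γ := by
    have := tsum_lt_div_of_shift_lt_mul hb (fun n => measureReal_le_one) hanti hk hc hstep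
    rwa [sub_sub_cancel, div_div_cancel₀ (by positivity)] at this
  calc ∫⁻ ω, (T ω : ℝ≥0∞) ∂P = ∑' n, P {ω | n < T ω} :=
        lintegral_natCast_eq_tsum_measure_lt P hTmeas
    _ = ENNReal.ofReal (∑' n, b n) := by
      rw [ENNReal.ofReal_tsum_of_nonneg hb hsummable]
      exact tsum_congr fun n => (ofReal_measureReal (measure_ne_top P _)).symm
    _ < ENNReal.ofReal γ := (ENNReal.ofReal_lt_ofReal_iff hγ).2 hsum_lt
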